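/- Let m, M, K₁, K₂, r be real numbers with 0 < m ≤ M, K₁ > 0, K₂ ≥ 0, and r ≥ 0, and set k = M/m and ε = (1/(2 K₁ k¹²))^{1/4}. Assume the smallness condition 1/2 − K₂/(ε⁸ m¹²) − r/(ε⁴ m⁸) ≥ 0 holds. Then for every real number t with m ≤ t ≤ M, one has ε t⁵ − (K₁ (ε M)¹² + K₂) (ε t)^{−7} − r (ε t)^{−3} ≥ 0. -/
import Mathlib


/-- Algebraic core of the global supersolution construction (Theorem 1):
with `k = M/m`, `ε = (1/(2 K₁ k¹²))^{1/4}`, and the smallness condition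
`1/2 − K₂/(ε⁸ m¹²) − r/(ε⁴ m⁸) ≥ 0`, for every `t ∈ [m, M]` one has
`ε t⁵ − (K₁ (ε M)¹² + K₂)(ε t)⁻⁷ − r (ε t)⁻³ ≥ 0`. -/
theorem supersolution_pointwise_inequality
    (m M K₁ K₂ r : ℝ) (hm : 0 < m) (hmM : m ≤ M)
    (hK₁ : 0 < K₁) (hK₂ : 0 ≤ K₂) (hr : 0 ≤ r)
    (k ε : ℝ) (hk : k = M / m)
    (hε : ε = (1 / (2 * K₁ * k ^ 12)) ^ ((1 : ℝ) / 4))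
    (hsmall : 1 / 2 - K₂ / (ε ^ 8 * m ^ 12) - r / (ε ^ 4 * m ^ 8) ≥ 0) :
    ∀ t : ℝ, m ≤ t → t ≤ M →
      ε * t ^ 5 - (K₁ * (ε * M) ^ 12 + K₂) * (ε * t) ^ (-7 : ℤ)
        - r * (ε * t) ^ (-3 : ℤ) ≥ 0 := by
  intro t hmt htM
  have hM : 0 < M := lt_of_lt_of_le hm hmM
  have hk0 : 0 < k := by rw [hk]; positivity
  have hx : 0 < 1 / (2 * K₁ * k ^ 12) := by positivity
  have hε4 : ε ^ 4 = 1 / (2 * K₁ * k ^ 12) := by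
    rw [hε, ← Real.rpow_natCast ((1 / (2 * K₁ * k ^ 12)) ^ ((1:ℝ)/4)) 4,
      ← Real.rpow_mul hx.le]
    norm_num
  have hεpos : 0 < ε := by
    rw [hε]; exact Real.rpow_pos_of_pos hx _
  have ht : 0 < t := lt_of_lt_of_le hm hmt
  -- From hε4 : 2 * K₁ * ε^4 * M^12 = m^12
  have hεM : 2 * K₁ * ε ^ 4 * M ^ 12 = m ^ 12 := by
    have h1 : ε ^ 4 * (2 * K₁ * k ^ 12) = 1 := by
      rw [hε4]; field_simp
    rw [hk] at h1
    field_simp at h1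
    nlinarith [h1]
  -- From hsmall : K₂ + r * ε^4 * m^4 ≤ ε^8 * m^12 / 2
  have hsm2 : K₂ + r * ε ^ 4 * m ^ 4 ≤ ε ^ 8 * m ^ 12 / 2 := by
    have h8 : 0 < ε ^ 8 * m ^ 12 := by positivity
    have h4 : 0 < ε ^ 4 * m ^ 8 := by positivity
    have h1 : K₂ / (ε ^ 8 * m ^ 12) + r / (ε ^ 4 * m ^ 8) ≤ 1 / 2 := by linarith
    have h2 := (div_add_div _ _ (ne_of_gt h8) (ne_of_gt h4)) ▸ h1
    rw [div_le_iff₀ (by positivity)] at h2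
    nlinarith [h2, pow_pos hm 4, pow_pos hεpos 4]
  have hre : r * ε ^ 4 ≤ ε ^ 8 * m ^ 8 / 2 := by
    have hm4 : 0 < m ^ 4 := by positivity
    have : r * ε ^ 4 * m ^ 4 ≤ ε ^ 8 * m ^ 12 / 2 := by linarith
    nlinarith [this]
  have ht4 : m ^ 4 ≤ t ^ 4 := pow_le_pow_left₀ hm.le hmt 4
  have ht8 : m ^ 8 ≤ t ^ 8 := pow_le_pow_left₀ hm.le hmt 8
  have ht12 : m ^ 12 ≤ t ^ 12 := pow_le_pow_left₀ hm.le hmt 12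
  have key : ε ^ 8 * t ^ 12 - (K₁ * (ε * M) ^ 12 + K₂) - r * (ε * t) ^ 4 ≥ 0 := by
    have hKM : K₁ * (ε * M) ^ 12 = ε ^ 8 * m ^ 12 / 2 := by
      have : (ε * M) ^ 12 = ε ^ 12 * M ^ 12 := by ring
      rw [this]; nlinarith [hεM, pow_pos hεpos 8]
    rw [hKM]
    have hchain : r * ε ^ 4 * (t ^ 4 - m ^ 4) ≤ ε ^ 8 * m ^ 8 / 2 * (t ^ 4 - m ^ 4) :=
      mul_le_mul_of_nonneg_right hre (by linarith)
    have hfac : ε ^ 8 * m ^ 8 / 2 * (t ^ 4 - m ^ 4) ≤ ε ^ 8 * (t ^ 12 - m ^ 12) := by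
      have hε8 : 0 ≤ ε ^ 8 := by positivity
      have h1 : m ^ 8 * t ^ 4 ≤ t ^ 12 := by
        calc m ^ 8 * t ^ 4 ≤ t ^ 8 * t ^ 4 :=
              mul_le_mul_of_nonneg_right ht8 (by positivity)
          _ = t ^ 12 := by ring
      have inner : m ^ 8 / 2 * (t ^ 4 - m ^ 4) ≤ t ^ 12 - m ^ 12 := by
        have he : m ^ 8 / 2 * (t ^ 4 - m ^ 4) = m ^ 8 * t ^ 4 / 2 - m ^ 12 / 2 := by ring
        rw [he]; linarith
      calc ε ^ 8 * m ^ 8 / 2 * (t ^ 4 - m ^ 4) = ε ^ 8 * (m ^ 8 / 2 * (t ^ 4 - m ^ 4)) := by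
            ring
        _ ≤ ε ^ 8 * (t ^ 12 - m ^ 12) := mul_le_mul_of_nonneg_left inner hε8
    have hrt : r * (ε * t) ^ 4 = r * ε ^ 4 * t ^ 4 := by ring
    rw [hrt]
    have hcomb : r * ε ^ 4 * (t ^ 4 - m ^ 4) ≤ ε ^ 8 * (t ^ 12 - m ^ 12) :=
      le_trans hchain hfac
    ring_nf at hcomb hsm2 ⊢
    linarith
  have hat : 0 < ε * t := by positivity
  have h7 : (0:ℝ) < (ε * t) ^ 7 := by positivity
  have heq : ε * t ^ 5 - (K₁ * (ε * M) ^ 12 + K₂) * (ε * t) ^ (-7 : ℤ)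
      - r * (ε * t) ^ (-3 : ℤ)
      = (ε ^ 8 * t ^ 12 - (K₁ * (ε * M) ^ 12 + K₂) - r * (ε * t) ^ 4) / (ε * t) ^ 7 := by
    rw [zpow_neg, zpow_neg]
    have h3 : ((ε * t) ^ (3:ℤ)) = (ε * t) ^ (3:ℕ) := by norm_cast
    have h7' : ((ε * t) ^ (7:ℤ)) = (ε * t) ^ (7:ℕ) := by norm_cast
    rw [h3, h7']
    field_simp
  rw [heq]
  exact div_nonneg key h7.le
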